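/- Let κ, τ, θ : ℝ² → ℝ be smooth (C^∞) functions of (t,x) with κ(t,x) > 0 for all (t,x), satisfying ∂_x θ = -τ, ∂_t θ = -(∂_x²κ/κ - τ² + (1/2)κ²), and the vortex-filament (Heisenberg flow) curvature equation ∂_t κ = -κ ∂_x τ - 2 (∂_x κ) τ. Then the complex-valued function u(t,x) := κ(t,x) e^{-iθ(t,x)} (the Hasimoto transformation) satisfies the focusing nonlinear Schrödinger equation -i ∂_t u = ∂_x² u + (1/2)|u|² u. -/

import Mathlib

/-!
Differentiating a product `a e^{-iθ}` amounts to applying the covariant derivative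
`∂ ↦ ∂ - i (∂θ)` to the amplitude `a`. With `θ_x = -τ` this gives `u_x = (κ_x + iκτ) e^{-iθ}`,
and likewise `u_xx` and `u_t` are explicit amplitudes times `e^{-iθ}`. Since `|u| = κ`, after
cancelling `e^{-iθ}` the real part of the NLS is the `θ_t` equation multiplied by `κ`, and the
imaginary part is the curvature equation for `κ_t`.
-/

noncomputable section

/-- Partial derivative with respect to the first variable `t`. -/
def pt {E : Type*} [NormedAddCommGroup E] [NormedSpace ℝ E]
    (f : ℝ × ℝ → E) : ℝ × ℝ → E := fun p => deriv (fun s => f (s, p.2)) p.1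

/-- Partial derivative with respect to the second variable `x`. -/
def px {E : Type*} [NormedAddCommGroup E] [NormedSpace ℝ E]
    (f : ℝ × ℝ → E) : ℝ × ℝ → E := fun p => deriv (fun s => f (p.1, s)) p.2

open Complex

section PartialDerivatives

variable {E : Type*} [NormedAddCommGroup E] [NormedSpace ℝ E] {f : ℝ × ℝ → E}

lemma hasDerivAt_px (hf : Differentiable ℝ f) (p : ℝ × ℝ) :
    HasDerivAt (fun s => f (p.1, s)) (px f p) p.2 :=
  ((hf p).comp p.2 ((differentiableAt_const p.1).prodMk differentiableAt_id)).hasDerivAt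

lemma hasDerivAt_pt (hf : Differentiable ℝ f) (p : ℝ × ℝ) :
    HasDerivAt (fun s => f (s, p.2)) (pt f p) p.1 :=
  ((hf p).comp p.1 (differentiableAt_id.prodMk (differentiableAt_const p.2))).hasDerivAt

lemma px_eq_fderiv (hf : Differentiable ℝ f) (p : ℝ × ℝ) :
    px f p = fderiv ℝ f p (0, 1) :=
  ((hf p).hasFDerivAt.comp_hasDerivAt p.2
    ((hasDerivAt_const p.2 p.1).prodMk (hasDerivAt_id p.2))).deriv

lemma contDiff_px {n : WithTop ℕ∞} (hf : ContDiff ℝ (n + 1) f) : ContDiff ℝ n (px f) := by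
  rw [show px f = fun p => fderiv ℝ f p (0, 1) from
    funext (px_eq_fderiv (hf.differentiable (by simp)))]
  exact (hf.fderiv_right le_rfl).clm_apply contDiff_const

end PartialDerivatives

lemma px_ofReal {f : ℝ × ℝ → ℝ} (hf : Differentiable ℝ f) (p : ℝ × ℝ) :
    px (fun q => (f q : ℂ)) p = px f p :=
  (hasDerivAt_px hf p).ofReal_comp.deriv

lemma pt_ofReal {f : ℝ × ℝ → ℝ} (hf : Differentiable ℝ f) (p : ℝ × ℝ) :
    pt (fun q => (f q : ℂ)) p = pt f p :=
  (hasDerivAt_pt hf p).ofReal_comp.deriv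

lemma HasDerivAt.mul_cexp_neg_I_mul {g : ℝ → ℂ} {θ : ℝ → ℝ} {g' : ℂ} {θ' x : ℝ}
    (hg : HasDerivAt g g' x) (hθ : HasDerivAt θ θ' x) :
    HasDerivAt (fun s => g s * cexp (-I * (θ s : ℂ)))
      ((g' - I * (θ' : ℂ) * g x) * cexp (-I * (θ x : ℂ))) x :=
  (hg.mul (hθ.ofReal_comp.const_mul (-I)).cexp).congr_deriv (by ring)

section Gauge

variable {g : ℝ × ℝ → ℂ} {θ : ℝ × ℝ → ℝ}

lemma px_mul_cexp_neg_I_mul (hg : Differentiable ℝ g) (hθ : Differentiable ℝ θ) (p : ℝ × ℝ) :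
    px (fun q => g q * cexp (-I * θ q)) p = (px g p - I * px θ p * g p) * cexp (-I * θ p) :=
  (HasDerivAt.mul_cexp_neg_I_mul (hasDerivAt_px hg p) (hasDerivAt_px hθ p)).deriv

lemma pt_mul_cexp_neg_I_mul (hg : Differentiable ℝ g) (hθ : Differentiable ℝ θ) (p : ℝ × ℝ) :
    pt (fun q => g q * cexp (-I * θ q)) p = (pt g p - I * pt θ p * g p) * cexp (-I * θ p) :=
  (HasDerivAt.mul_cexp_neg_I_mul (hasDerivAt_pt hg p) (hasDerivAt_pt hθ p)).deriv

end Gauge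

lemma norm_ofReal_mul_cexp_neg_I_mul (r θ : ℝ) : ‖(r : ℂ) * cexp (-I * θ)‖ = |r| := by
  simp [norm_exp]

/-- The Hasimoto transformation `u = κ e^{-iθ}` maps solutions of the
vortex-filament (Heisenberg flow) curvature/torsion equations to solutions of
the focusing nonlinear Schrödinger equation `-i u_t = u_xx + (1/2)|u|² u`. -/
theorem hasimoto_transformation_NLS
    (κ τ θ : ℝ × ℝ → ℝ)
    (hκ : ContDiff ℝ (⊤ : ℕ∞) κ) (hτ : ContDiff ℝ (⊤ : ℕ∞) τ)
    (hθ : ContDiff ℝ (⊤ : ℕ∞) θ)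
    (hκpos : ∀ p, 0 < κ p)
    (hθx : ∀ p, px θ p = -τ p)
    (hθt : ∀ p, pt θ p = -(px (px κ) p / κ p - (τ p) ^ 2 + (1 / 2) * (κ p) ^ 2))
    (hκt : ∀ p, pt κ p = -(κ p) * px τ p - 2 * (px κ p) * τ p)
    (u : ℝ × ℝ → ℂ)
    (hu : ∀ p, u p = (κ p : ℂ) * Complex.exp (-Complex.I * (θ p : ℂ))) :
    ∀ p, -Complex.I * pt u p
      = px (px u) p + (1 / 2) * (‖u p‖ : ℂ) ^ 2 * u p := by
  intro p
  have hκd : Differentiable ℝ κ := hκ.differentiable (by simp)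
  have hτd : Differentiable ℝ τ := hτ.differentiable (by simp)
  have hθd : Differentiable ℝ θ := hθ.differentiable (by simp)
  have hκxd : Differentiable ℝ (px κ) :=
    (contDiff_px (hκ.of_le (by norm_cast) : ContDiff ℝ (1 + 1) κ)).differentiable
      one_ne_zero
  have hκCd : Differentiable ℝ (fun q => (κ q : ℂ)) := ofRealCLM.differentiable.comp hκd
  obtain rfl : u = fun q => (κ q : ℂ) * cexp (-I * θ q) := funext hu
  have hux : px (fun q => (κ q : ℂ) * cexp (-I * θ q))
      = fun q => (px κ q + I * (κ q * τ q)) * cexp (-I * θ q) := by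
    funext q
    rw [px_mul_cexp_neg_I_mul hκCd hθd, px_ofReal hκd, hθx]
    push_cast
    ring
  have huxx : px (px (fun q => (κ q : ℂ) * cexp (-I * θ q))) p
      = (px (px κ) p + I * (px κ p * τ p + κ p * px τ p)
          - I * px θ p * (px κ p + I * (κ p * τ p))) * cexp (-I * θ p) := by
    rw [hux]
    exact (HasDerivAt.mul_cexp_neg_I_mul ((hasDerivAt_px hκxd p).ofReal_comp.add
      (((hasDerivAt_px hκd p).ofReal_comp.mul (hasDerivAt_px hτd p).ofReal_comp).const_mul I))
      (hasDerivAt_px hθd p)).deriv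
  have hθt' : (κ p : ℂ) * pt θ p = -(px (px κ) p - κ p * τ p ^ 2 + 1 / 2 * κ p ^ 3) := by
    rw [hθt]
    push_cast
    field_simp [ofReal_ne_zero.mpr (hκpos p).ne']
  rw [huxx, pt_mul_cexp_neg_I_mul hκCd hθd, pt_ofReal hκd, norm_ofReal_mul_cexp_neg_I_mul,
    abs_of_pos (hκpos p), hθx, hκt]
  push_cast
  linear_combination (-cexp (-I * θ p)) * hθt'
    + ((κ p * pt θ p - κ p * τ p ^ 2 : ℂ) * cexp (-I * θ p)) * I_sq
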